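/- arXiv:2410.16247 — 2 statements merged into one kernel-verified Lean document; each statement's English description precedes it below -/
import Mathlib

section
/- With the signal–noise decomposition U_t = U_t*W_t*W_tᵀ + U_t*W_{t,⊥}*W_{t,⊥}ᵀ: (i) the tensor-column space of the noise term is orthogonal to that of X, i.e. V_Xᵀ*U_t*W_{t,⊥}*W_{t,⊥}ᵀ = 0; (ii) if V_Xᵀ*U_t has full tubal rank r with all singular tubes invertible (equivalently every Fourier slice (V_Xᵀ*U_t)‾^{(j)} has full rank r), then the signal term U_t*W_t*W_tᵀ has tubal rank r with all singular tubes invertible, and the noise term U_t*W_{t,⊥}*W_{t,⊥}ᵀ has tubal rank at most R − r. -/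
open scoped BigOperators ComplexOrder
open MeasureTheory

namespace Tubal

/-- A real tubal tensor of size `m × n × k`. -/
abbrev Tensor (m n k : ℕ) := Fin m → Fin n → Fin k → ℝ

/-- The `j`-th Fourier-domain (frontal) slice of a tubal tensor. -/
noncomputable def slice {m n k : ℕ} (T : Tensor m n k) (j : Fin k) :
    Matrix (Fin m) (Fin n) ℂ := fun i i' =>
  ∑ j' : Fin k, (T i i' j' : ℂ) *
    Complex.exp (-(2 * (Real.pi : ℂ) * Complex.I * ((j : ℕ) : ℂ) * ((j' : ℕ) : ℂ)) / ((k : ℕ) : ℂ))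

/-- The tubal product (t-product) of two tubal tensors. -/
def tprod {m q n k : ℕ} (A : Tensor m q k) (B : Tensor q n k) : Tensor m n k :=
  fun i i' l => ∑ p : Fin q, ∑ l' : Fin k, A i p l' * B p i' (l - l')

/-- The tubal transpose. -/
def ttr {m n k : ℕ} (T : Tensor m n k) : Tensor n m k := fun i i' j => T i' i (-j)

/-- The identity tubal tensor. -/
def tId (n k : ℕ) : Tensor n n k := fun i i' j => if i = i' ∧ (j : ℕ) = 0 then 1 else 0

/-- Frobenius norm of a tubal tensor. -/
noncomputable def frobNorm {m n k : ℕ} (T : Tensor m n k) : ℝ :=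
  Real.sqrt (∑ i, ∑ i', ∑ j, (T i i' j) ^ 2)

/-- Entrywise inner product of tubal tensors. -/
def tinner {m n k : ℕ} (T S : Tensor m n k) : ℝ := ∑ i, ∑ i', ∑ j, T i i' j * S i i' j

/-- ℓ₂-operator norm of a complex matrix. -/
noncomputable def matOpNorm {m n : ℕ} (M : Matrix (Fin m) (Fin n) ℂ) : ℝ :=
  ‖LinearMap.toContinuousLinearMap (Matrix.toEuclideanLin M)‖

/-- Tensor spectral norm: max over Fourier slices of operator norm. -/
noncomputable def specNorm {m n k : ℕ} (T : Tensor m n k) : ℝ :=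
  ⨆ j : Fin k, matOpNorm (slice T j)

/-- `i`-th largest singular value (0-based index into `Fin n`). -/
noncomputable def svalIdx {m n : ℕ} (M : Matrix (Fin m) (Fin n) ℂ) (i : Fin n) : ℝ :=
  Real.sqrt (((Matrix.isHermitian_conjTranspose_mul_self M).eigenvalues)
    ((Tuple.sort ((Matrix.isHermitian_conjTranspose_mul_self M).eigenvalues)) i.rev))

/-- `i`-th largest singular value of a matrix, `1`-based (σ₁ is the largest). -/
noncomputable def sval {m n : ℕ} (M : Matrix (Fin m) (Fin n) ℂ) (i : ℕ) : ℝ :=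
  if h : i - 1 < n then svalIdx M ⟨i - 1, h⟩ else 0

/-- Smallest singular value of an `m × n` matrix. -/
noncomputable def sminMat {m n : ℕ} (M : Matrix (Fin m) (Fin n) ℂ) : ℝ :=
  sval M (min m n)

/-- σ_min of the block-diagonal Fourier representation of a tensor:
the minimum over slices of the smallest singular value. -/
noncomputable def tSMin {m n k : ℕ} (T : Tensor m n k) : ℝ :=
  ⨅ j : Fin k, sminMat (slice T j)

/-- The tubal rank: maximum over slices of the matrix rank. -/
noncomputable def trank {m n k : ℕ} (T : Tensor m n k) : ℕ :=
  Finset.univ.sup fun j : Fin k => (slice T j).rank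

/-- Condition number `κ(T) = σ₁(T̄)/σ_{min{m,n}k}(T̄)`. -/
noncomputable def cond {m n k : ℕ} (T : Tensor m n k) : ℝ := specNorm T / tSMin T

/-- Tensor nuclear norm `(1/k)·Σ_{j,i} σ_i(T̄^{(j)})`. -/
noncomputable def nucNorm {m n k : ℕ} (T : Tensor m n k) : ℝ :=
  (1 / (k : ℝ)) * ∑ j : Fin k, ∑ i : Fin n, svalIdx (slice T j) i

/-- The linear measurement map `𝒜`. -/
def Ameas {n k m : ℕ} (A : Fin m → Tensor n n k) (Z : Tensor n n k) : Fin m → ℝ :=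
  fun i => tinner (A i) Z

/-- `𝒜*𝒜`. -/
def AtA {n k m : ℕ} (A : Fin m → Tensor n n k) (Z : Tensor n n k) : Tensor n n k :=
  fun p q l => ∑ i, tinner (A i) Z * A i p q l

/-- Restricted isometry property of rank `r` with constant `δ`. -/
def RIP {n k m : ℕ} (A : Fin m → Tensor n n k) (r : ℕ) (δ : ℝ) : Prop :=
  ∀ Z : Tensor n n k, ttr Z = Z → trank Z ≤ r →
    (1 - δ) * frobNorm Z ^ 2 ≤ ∑ i, (tinner (A i) Z) ^ 2 ∧
      ∑ i, (tinner (A i) Z) ^ 2 ≤ (1 + δ) * frobNorm Z ^ 2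

/-- Spectral-to-nuclear restricted isometry property. -/
def S2NRIP {n k m : ℕ} (A : Fin m → Tensor n n k) (δ : ℝ) : Prop :=
  ∀ Z : Tensor n n k, ttr Z = Z → specNorm (Z - AtA A Z) ≤ δ * nucNorm Z

/-- One gradient-descent step `U ↦ [𝕀 + μ(𝒜*𝒜)(X*Xᵀ − U*Uᵀ)]*U`. -/
noncomputable def gdStep {n r R k m : ℕ} (A : Fin m → Tensor n n k) (X : Tensor n r k)
    (μ : ℝ) (U : Tensor n R k) : Tensor n R k :=
  tprod (tId n k + μ • AtA A (tprod X (ttr X) - tprod U (ttr U))) U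

/-- Gradient descent iterates. -/
noncomputable def gdIter {n r R k m : ℕ} (A : Fin m → Tensor n n k) (X : Tensor n r k)
    (μ : ℝ) (U0 : Tensor n R k) : ℕ → Tensor n R k
  | 0 => U0
  | t + 1 => gdStep A X μ (gdIter A X μ U0 t)

/-- `t`-fold tubal power. -/
noncomputable def tpow {n k : ℕ} (T : Tensor n n k) : ℕ → Tensor n n k
  | 0 => tId n k
  | t + 1 => tprod T (tpow T t)

/-- Block-diagonal Fourier-domain matrix representation of a tensor. -/
noncomputable def bdiag {m n k : ℕ} (T : Tensor m n k) :
    Matrix (Fin k × Fin m) (Fin k × Fin n) ℂ :=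
  fun p q => if p.1 = q.1 then slice T p.1 p.2 q.2 else 0

/-- ℓ₂ norm of a complex vector. -/
noncomputable def l2norm {ι : Type*} [Fintype ι] (w : ι → ℂ) : ℝ :=
  Real.sqrt (∑ i, Complex.normSq (w i))

/-- i.i.d. Gaussian measure on tubal tensors, each entry `N(0, v)`. -/
noncomputable def gaussianTensor (n R k : ℕ) (v : NNReal) : Measure (Tensor n R k) :=
  Measure.pi fun _ => Measure.pi fun _ => Measure.pi fun _ =>
    ProbabilityTheory.gaussianReal 0 v

/-- The first `r` tensor columns. -/
def cols {a p k : ℕ} (T : Tensor a p k) (r : ℕ) (h : r ≤ p) : Tensor a r k :=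
  fun i s j => T i (Fin.castLE h s) j

/-- `W` is orthonormal: `Wᵀ*W = 𝕀`. -/
def ONB {p q k : ℕ} (W : Tensor p q k) : Prop := tprod (ttr W) W = tId q k

/-- `Q` is an orthogonal tubal tensor. -/
def Orthogonal {p k : ℕ} (Q : Tensor p p k) : Prop :=
  tprod Q (ttr Q) = tId p k ∧ tprod (ttr Q) Q = tId p k

/-- `V` is an orthonormal basis for the tensor-column space of `Y`. -/
def IsColBasis {a b q k : ℕ} (Y : Tensor a b k) (V : Tensor a q k) : Prop :=
  ONB V ∧ tprod V (tprod (ttr V) Y) = Y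

/-- `Vp` is an orthonormal complement of the orthonormal `V`. -/
def IsOrthCompl {a q q' k : ℕ} (V : Tensor a q k) (Vp : Tensor a q' k) : Prop :=
  ONB Vp ∧ tprod (ttr Vp) V = 0 ∧
    tprod V (ttr V) + tprod Vp (ttr Vp) = tId a k

/-- `S` is an f-diagonal tensor with nonnegative, nonincreasing (real) diagonal in
every Fourier slice: the middle factor of a t-SVD. -/
def IsFDiagSorted {p q k : ℕ} (S : Tensor p q k) : Prop :=
  (∀ j : Fin k, ∀ i : Fin p, ∀ i' : Fin q, (i : ℕ) ≠ (i' : ℕ) → slice S j i i' = 0) ∧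
  (∀ j : Fin k, ∀ i : Fin p, ∀ i' : Fin q, (i : ℕ) = (i' : ℕ) →
    (slice S j i i').im = 0 ∧ 0 ≤ (slice S j i i').re) ∧
  (∀ j : Fin k, ∀ i₁ i₂ : Fin p, ∀ i₁' i₂' : Fin q, (i₁ : ℕ) = (i₁' : ℕ) →
    (i₂ : ℕ) = (i₂' : ℕ) → (i₁ : ℕ) ≤ (i₂ : ℕ) →
    (slice S j i₂ i₂').re ≤ (slice S j i₁ i₁').re)

/-- `(V, S, W)` is a t-SVD of `T`. -/
def IsTSVD {p q k : ℕ} (T : Tensor p q k) (V : Tensor p p k) (S : Tensor p q k)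
    (W : Tensor q q k) : Prop :=
  Orthogonal V ∧ Orthogonal W ∧ IsFDiagSorted S ∧ T = tprod V (tprod S (ttr W))

/-!
The discrete Fourier transform turns the t-product into slicewise matrix products (the
convolution theorem, with `dftRoot k ^ j` a `k`-th root of unity), so the rank claims are the
matrix facts `rank (A * B) ≤ min (rank A) (rank B) ≤ width A`: the signal term factors through
`r` tensor columns and `V_Xᵀ` times it is `V_Xᵀ * U`, of rank `r`, while the noise term factors
through `R - r` columns. Part (i) is algebra: `V_Xᵀ * U = V_Xᵀ * U * W * Wᵀ` and
`Wᵀ * W_⊥ = 0`.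
-/

noncomputable def dftRoot (k : ℕ) : ℂ := Complex.exp (-(2 * Real.pi * Complex.I) / k)

lemma dftRoot_pow_self (k : ℕ) : dftRoot k ^ k = 1 := by
  rcases Nat.eq_zero_or_pos k with rfl | hk
  · simp
  have hk' : (k : ℂ) ≠ 0 := by exact_mod_cast hk.ne'
  rw [dftRoot, ← Complex.exp_nat_mul, mul_div_cancel₀ _ hk', Complex.exp_neg,
    Complex.exp_two_pi_mul_I, inv_one]

lemma slice_apply {m n k : ℕ} (T : Tensor m n k) (j : Fin k) (i : Fin m) (i' : Fin n) :
    slice T j i i' = ∑ l : Fin k, (T i i' l : ℂ) * (dftRoot k ^ (j : ℕ)) ^ (l : ℕ) := by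
  refine Finset.sum_congr rfl fun l _ => ?_
  rw [← pow_mul, dftRoot, ← Complex.exp_nat_mul]
  congr 2
  push_cast
  ring

lemma pow_val_add_of_pow_eq_one {M : Type*} [Monoid M] {k : ℕ} {z : M} (hz : z ^ k = 1)
    (a b : Fin k) : z ^ ((a + b : Fin k) : ℕ) = z ^ (a : ℕ) * z ^ (b : ℕ) := by
  rw [Fin.val_add, ← pow_eq_pow_mod _ hz, pow_add]

lemma sum_circConv_mul_pow {R : Type*} [CommSemiring R] {k : ℕ} [NeZero k] {z : R}
    (hz : z ^ k = 1) (a b : Fin k → R) :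
    ∑ l : Fin k, (∑ l' : Fin k, a l' * b (l - l')) * z ^ (l : ℕ)
      = (∑ l : Fin k, a l * z ^ (l : ℕ)) * ∑ l : Fin k, b l * z ^ (l : ℕ) := by
  rw [Finset.sum_mul_sum]
  simp only [Finset.sum_mul]
  rw [Finset.sum_comm]
  refine Finset.sum_congr rfl fun l' _ => ?_
  refine Fintype.sum_equiv (Equiv.subRight l') _ _ fun l => ?_
  rw [Equiv.subRight_apply, mul_mul_mul_comm, ← pow_val_add_of_pow_eq_one hz, add_sub_cancel]

lemma slice_tprod {m q n k : ℕ} (A : Tensor m q k) (B : Tensor q n k) (j : Fin k) :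
    slice (tprod A B) j = slice A j * slice B j := by
  ext i i'
  simp only [slice_apply, Matrix.mul_apply, tprod, Complex.ofReal_sum, Complex.ofReal_mul]
  have : NeZero k := ⟨j.pos.ne'⟩
  have hz : (dftRoot k ^ (j : ℕ)) ^ k = 1 := by
    rw [← pow_mul, mul_comm, pow_mul, dftRoot_pow_self, one_pow]
  simp_rw [← sum_circConv_mul_pow hz, Finset.sum_mul]
  exact Finset.sum_comm

lemma tprod_assoc {m a b n k : ℕ} (A : Tensor m a k) (B : Tensor a b k) (C : Tensor b n k) :
    tprod (tprod A B) C = tprod A (tprod B C) := by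
  funext i i' l
  have : NeZero k := ⟨l.pos.ne'⟩
  have shift : ∀ p q l', ∑ s : Fin k, B p q s * C q i' (l - l' - s)
      = ∑ s : Fin k, B p q (s - l') * C q i' (l - s) := fun p q l' =>
    Fintype.sum_equiv (Equiv.addRight l') _ _ fun s => by simp [sub_sub, add_comm]
  simp only [tprod, shift, Finset.sum_mul, Finset.mul_sum, ← mul_assoc]
  -- reorder `∑ q ∑ s ∑ p ∑ l'` into `∑ p ∑ l' ∑ q ∑ s`
  refine (Finset.sum_congr rfl fun _ _ => Finset.sum_comm).trans (Finset.sum_comm.trans ?_)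
  refine Finset.sum_congr rfl fun _ _ => ?_
  exact (Finset.sum_congr rfl fun _ _ => Finset.sum_comm).trans Finset.sum_comm

lemma ttr_ttr {m n k : ℕ} (T : Tensor m n k) : ttr (ttr T) = T := by
  funext i i' j
  simp [ttr]

lemma ttr_tprod {m q n k : ℕ} (A : Tensor m q k) (B : Tensor q n k) :
    ttr (tprod A B) = tprod (ttr B) (ttr A) := by
  funext i i' l
  have : NeZero k := ⟨l.pos.ne'⟩
  simp only [ttr, tprod]
  refine Finset.sum_congr rfl fun p _ => Fintype.sum_equiv (Equiv.addLeft l) _ _ fun l' => ?_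
  rw [Equiv.coe_addLeft, mul_comm]
  congr 2 <;> grind

lemma tprod_zero_left {m q n k : ℕ} (B : Tensor q n k) : tprod (0 : Tensor m q k) B = 0 := by
  funext i i' l
  simp [tprod]

lemma tprod_zero_right {m q n k : ℕ} (A : Tensor m q k) : tprod A (0 : Tensor q n k) = 0 := by
  funext i i' l
  simp [tprod]

lemma rank_slice_tprod_le_width {m q n k : ℕ} (A : Tensor m q k) (B : Tensor q n k) (j : Fin k) :
    (slice (tprod A B) j).rank ≤ q := by
  rw [slice_tprod]
  calc (slice A j * slice B j).rank ≤ (slice A j).rank := Matrix.rank_mul_le_left _ _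
    _ ≤ Fintype.card (Fin q) := Matrix.rank_le_card_width _
    _ = q := Fintype.card_fin q

lemma rank_slice_tprod_le_right {m q n k : ℕ} (A : Tensor m q k) (B : Tensor q n k) (j : Fin k) :
    (slice (tprod A B) j).rank ≤ (slice B j).rank := by
  rw [slice_tprod]
  exact Matrix.rank_mul_le_right _ _

lemma trank_tprod_le_width {m q n k : ℕ} (A : Tensor m q k) (B : Tensor q n k) :
    trank (tprod A B) ≤ q :=
  Finset.sup_le fun j _ => rank_slice_tprod_le_width A B j

theorem statement1_general {n r R k : ℕ}
    (U : Tensor n R k)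
    (VX : Tensor n r k)
    (W : Tensor R r k)
    (hWfact : tprod (tprod (ttr VX) U) (tprod W (ttr W)) = tprod (ttr VX) U)
    (Wp : Tensor R (R - r) k) (hWp : IsOrthCompl W Wp) :
    tprod (ttr VX) (tprod U (tprod Wp (ttr Wp))) = 0 ∧
    ((∀ j : Fin k, (slice (tprod (ttr VX) U) j).rank = r) →
      (∀ j : Fin k, (slice (tprod U (tprod W (ttr W))) j).rank = r) ∧
        trank (tprod U (tprod Wp (ttr Wp))) ≤ R - r) := by
  have hWWp : tprod (ttr W) Wp = 0 := by
    rw [← ttr_ttr (tprod (ttr W) Wp), ttr_tprod, ttr_ttr, hWp.2.1]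
    rfl
  have hsignal : tprod (ttr VX) (tprod U (tprod W (ttr W))) = tprod (ttr VX) U := by
    rw [← tprod_assoc]
    exact hWfact
  refine ⟨?_, fun hfull => ⟨fun j => le_antisymm ?_ ?_, ?_⟩⟩
  · calc tprod (ttr VX) (tprod U (tprod Wp (ttr Wp)))
        = tprod (tprod (tprod (ttr VX) U) (tprod W (ttr W))) (tprod Wp (ttr Wp)) := by
          rw [hWfact, tprod_assoc]
      _ = tprod (tprod (ttr VX) U) (tprod W (tprod (tprod (ttr W) Wp) (ttr Wp))) := by
          simp only [tprod_assoc]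
      _ = 0 := by rw [hWWp, tprod_zero_left, tprod_zero_right, tprod_zero_right]
  · rw [← tprod_assoc]
    exact rank_slice_tprod_le_width _ _ j
  · calc r = (slice (tprod (ttr VX) U) j).rank := (hfull j).symm
      _ ≤ _ := hsignal ▸ rank_slice_tprod_le_right _ _ j
  · rw [← tprod_assoc]
    exact trank_tprod_le_width _ _

/-- With the signal–noise decomposition
`U_t = U_t*W_t*W_tᵀ + U_t*W_{t,⊥}*W_{t,⊥}ᵀ`:
(i) `V_Xᵀ*U_t*W_{t,⊥}*W_{t,⊥}ᵀ = 0`;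
(ii) if every Fourier slice of `V_Xᵀ*U_t` has full rank `r`, then every Fourier slice of
the signal term `U_t*W_t*W_tᵀ` has rank `r`, and the noise term `U_t*W_{t,⊥}*W_{t,⊥}ᵀ`
has tubal rank at most `R − r`. -/
theorem statement1 {n r R k : ℕ} (hr : r ≤ n) (hrR : r ≤ R)
    (X : Tensor n r k) (hrank : trank X = r)
    (U : Tensor n R k)
    (VX : Tensor n r k) (hVX : IsColBasis X VX)
    (W : Tensor R r k) (hW : ONB W)
    (hWfact : tprod (tprod (ttr VX) U) (tprod W (ttr W)) = tprod (ttr VX) U)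
    (Wp : Tensor R (R - r) k) (hWp : IsOrthCompl W Wp) :
    tprod (ttr VX) (tprod U (tprod Wp (ttr Wp))) = 0 ∧
    ((∀ j : Fin k, (slice (tprod (ttr VX) U) j).rank = r) →
      (∀ j : Fin k, (slice (tprod U (tprod W (ttr W))) j).rank = r) ∧
        trank (tprod U (tprod Wp (ttr Wp))) ≤ R - r) :=
  statement1_general U VX W hWfact Wp hWp

end Tubal
end

section
/- Suppose 𝒜 : S^{n×n×k} → ℝ^m satisfies RIP(r+r′, δ) with 0 < δ < 1. Then for any tubal-symmetric tensors Z, Y ∈ S^{n×n×k} with tubal rank(Z) ≤ r and tubal rank(Y) ≤ r′, one has |⟨(ℐ − 𝒜*𝒜)(Z), Y⟩| ≤ δ·‖Z‖_F·‖Y‖_F. -/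
open scoped BigOperators ComplexOrder
open MeasureTheory

namespace Tubal

/-!
The form `B(Z, Y) = ⟨(ℐ − 𝒜*𝒜)Z, Y⟩` is symmetric and bilinear, and RIP says
`|B(W, W)| ≤ δ‖W‖²` for tubal-symmetric `W` of tubal rank `≤ r + r'`. Tubal rank is
subadditive, so polarization `4B(P, Q) = B(P + Q, P + Q) − B(P − Q, P − Q)` together with the
parallelogram law gives `|B(P, Q)| ≤ δ(‖P‖² + ‖Q‖²)/2`. Applying this to `‖Y‖Z` and `‖Z‖Y`,
which have equal norms, and dividing by `‖Y‖‖Z‖` gives the claim.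
-/

theorem _root_.Matrix.rank_add_le {m n : Type*} [Fintype n] [Fintype m] {K : Type*} [Field K]
    (M N : Matrix m n K) : (M + N).rank ≤ M.rank + N.rank := by
  have hrange : LinearMap.range (M + N).mulVecLin ≤
      LinearMap.range M.mulVecLin ⊔ LinearMap.range N.mulVecLin := by
    rintro _ ⟨v, rfl⟩
    exact Submodule.mem_sup.2 ⟨_, ⟨v, rfl⟩, _, ⟨v, rfl⟩, by simp⟩
  exact (Submodule.finrank_mono hrange).trans (Submodule.finrank_add_le_finrank_add_finrank _ _)

theorem _root_.Matrix.rank_smul_le {m n : Type*} [Fintype n] [Fintype m] [DecidableEq m]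
    {K : Type*} [Field K] (c : K) (M : Matrix m n K) : (c • M).rank ≤ M.rank := by
  simpa [Matrix.smul_eq_diagonal_mul] using Matrix.rank_mul_le_right (Matrix.diagonal fun _ => c) M

section Rank

variable {m n k : ℕ}

theorem slice_add (T S : Tensor m n k) (j : Fin k) : slice (T + S) j = slice T j + slice S j := by
  ext i i'
  simp [slice, Finset.sum_add_distrib, add_mul]

theorem slice_smul (c : ℝ) (T : Tensor m n k) (j : Fin k) :
    slice (c • T) j = (c : ℂ) • slice T j := by
  ext i i'
  simp [slice, Finset.mul_sum, mul_assoc]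

theorem rank_slice_le_trank (T : Tensor m n k) (j : Fin k) : (slice T j).rank ≤ trank T :=
  Finset.le_sup (f := fun j => (slice T j).rank) (Finset.mem_univ j)

theorem trank_add_le (T S : Tensor m n k) : trank (T + S) ≤ trank T + trank S :=
  Finset.sup_le fun j _ => by
    rw [slice_add]
    exact (Matrix.rank_add_le _ _).trans
      (add_le_add (rank_slice_le_trank T j) (rank_slice_le_trank S j))

theorem trank_smul_le (c : ℝ) (T : Tensor m n k) : trank (c • T) ≤ trank T :=
  Finset.sup_le fun j _ => by
    rw [slice_smul]
    exact (Matrix.rank_smul_le _ _).trans (rank_slice_le_trank T j)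

theorem trank_sub_le (T S : Tensor m n k) : trank (T - S) ≤ trank T + trank S :=
  calc trank (T - S) = trank (T + (-1 : ℝ) • S) := by rw [neg_one_smul, sub_eq_add_neg]
    _ ≤ trank T + trank S := (trank_add_le _ _).trans (add_le_add le_rfl (trank_smul_le _ _))

end Rank

section Inner

variable {m n k : ℕ}

@[simp] theorem ttr_add (T S : Tensor m n k) : ttr (T + S) = ttr T + ttr S := rfl

@[simp] theorem ttr_sub (T S : Tensor m n k) : ttr (T - S) = ttr T - ttr S := rfl

@[simp] theorem ttr_smul (c : ℝ) (T : Tensor m n k) : ttr (c • T) = c • ttr T := rfl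

theorem tinner_comm (T S : Tensor m n k) : tinner T S = tinner S T := by
  simp [tinner, mul_comm]

theorem tinner_add_left (T S U : Tensor m n k) :
    tinner (T + S) U = tinner T U + tinner S U := by
  simp [tinner, add_mul, Finset.sum_add_distrib]

theorem tinner_sub_left (T S U : Tensor m n k) :
    tinner (T - S) U = tinner T U - tinner S U := by
  simp [tinner, sub_mul, Finset.sum_sub_distrib]

theorem tinner_smul_left (c : ℝ) (T S : Tensor m n k) : tinner (c • T) S = c * tinner T S := by
  simp [tinner, Finset.mul_sum, mul_assoc]

theorem tinner_add_right (T S U : Tensor m n k) :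
    tinner T (S + U) = tinner T S + tinner T U := by
  rw [tinner_comm, tinner_add_left, tinner_comm S, tinner_comm U]

theorem tinner_sub_right (T S U : Tensor m n k) :
    tinner T (S - U) = tinner T S - tinner T U := by
  rw [tinner_comm, tinner_sub_left, tinner_comm S, tinner_comm U]

theorem tinner_smul_right (c : ℝ) (T S : Tensor m n k) : tinner T (c • S) = c * tinner T S := by
  rw [tinner_comm, tinner_smul_left, tinner_comm]

theorem tinner_sum_left {ι : Type*} (s : Finset ι) (f : ι → Tensor m n k) (T : Tensor m n k) :
    tinner (∑ i ∈ s, f i) T = ∑ i ∈ s, tinner (f i) T :=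
  map_sum (AddMonoidHom.mk' (tinner · T) fun S U => tinner_add_left S U T) f s

theorem frobNorm_sq (T : Tensor m n k) : frobNorm T ^ 2 = tinner T T := by
  rw [frobNorm, Real.sq_sqrt (by positivity)]
  simp [tinner, sq]

theorem frobNorm_nonneg (T : Tensor m n k) : 0 ≤ frobNorm T := Real.sqrt_nonneg _

theorem frobNorm_eq_zero {T : Tensor m n k} : frobNorm T = 0 ↔ T = 0 := by
  rw [frobNorm, Real.sqrt_eq_zero (by positivity)]
  simp (disch := intros; positivity) [Finset.sum_eq_zero_iff_of_nonneg, funext_iff]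

theorem frobNorm_pos {T : Tensor m n k} (hT : T ≠ 0) : 0 < frobNorm T :=
  (frobNorm_nonneg T).lt_of_ne' (frobNorm_eq_zero.not.2 hT)

theorem frobNorm_smul_sq (c : ℝ) (T : Tensor m n k) :
    frobNorm (c • T) ^ 2 = c ^ 2 * frobNorm T ^ 2 := by
  simp only [frobNorm_sq, tinner_smul_left, tinner_smul_right]
  ring

theorem frobNorm_add_sq_add_frobNorm_sub_sq (T S : Tensor m n k) :
    frobNorm (T + S) ^ 2 + frobNorm (T - S) ^ 2 = 2 * (frobNorm T ^ 2 + frobNorm S ^ 2) := by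
  simp only [frobNorm_sq, tinner_add_left, tinner_add_right, tinner_sub_left, tinner_sub_right]
  ring

end Inner

section Measurement

variable {n k m : ℕ} (A : Fin m → Tensor n n k)

theorem AtA_eq_sum (Z : Tensor n n k) : AtA A Z = ∑ i, tinner (A i) Z • A i := by
  ext p q l
  simp [AtA, Finset.sum_apply]

theorem AtA_add (Z Y : Tensor n n k) : AtA A (Z + Y) = AtA A Z + AtA A Y := by
  simp only [AtA_eq_sum, tinner_add_right, add_smul, Finset.sum_add_distrib]

theorem AtA_sub (Z Y : Tensor n n k) : AtA A (Z - Y) = AtA A Z - AtA A Y := by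
  simp only [AtA_eq_sum, tinner_sub_right, sub_smul, Finset.sum_sub_distrib]

theorem AtA_smul (c : ℝ) (Z : Tensor n n k) : AtA A (c • Z) = c • AtA A Z := by
  simp only [AtA_eq_sum, tinner_smul_right, mul_smul, Finset.smul_sum]

theorem tinner_AtA_left (Z Y : Tensor n n k) :
    tinner (AtA A Z) Y = ∑ i, tinner (A i) Z * tinner (A i) Y := by
  simp only [AtA_eq_sum, tinner_sum_left, tinner_smul_left]

theorem tinner_AtA_comm (Z Y : Tensor n n k) : tinner (AtA A Z) Y = tinner (AtA A Y) Z := by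
  simp only [tinner_AtA_left, mul_comm]

theorem tinner_sub_AtA_polarization (P Q : Tensor n n k) :
    4 * tinner (P - AtA A P) Q = tinner (P + Q - AtA A (P + Q)) (P + Q)
      - tinner (P - Q - AtA A (P - Q)) (P - Q) := by
  simp only [AtA_add, AtA_sub, tinner_add_left, tinner_sub_left, tinner_add_right,
    tinner_sub_right]
  rw [tinner_comm Q P, tinner_AtA_comm A Q P]
  ring

end Measurement

section RIP

variable {n k m : ℕ} {A : Fin m → Tensor n n k} {δ : ℝ}

theorem RIP.abs_tinner_sub_AtA_self_le {r : ℕ} (hRIP : RIP A r δ) {W : Tensor n n k}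
    (hW : ttr W = W) (hr : trank W ≤ r) : |tinner (W - AtA A W) W| ≤ δ * frobNorm W ^ 2 := by
  obtain ⟨hlower, hupper⟩ := hRIP W hW hr
  rw [tinner_sub_left, tinner_AtA_left, ← frobNorm_sq, abs_le]
  simp only [← sq]
  constructor <;> linarith

theorem RIP.abs_tinner_sub_AtA_le {r r' : ℕ} (hRIP : RIP A (r + r') δ) {P Q : Tensor n n k}
    (hP : ttr P = P) (hQ : ttr Q = Q) (hrP : trank P ≤ r) (hrQ : trank Q ≤ r') :
    |tinner (P - AtA A P) Q| ≤ δ / 2 * (frobNorm P ^ 2 + frobNorm Q ^ 2) := by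
  have hadd := hRIP.abs_tinner_sub_AtA_self_le (by simp [hP, hQ])
    ((trank_add_le P Q).trans (add_le_add hrP hrQ))
  have hsub := hRIP.abs_tinner_sub_AtA_self_le (by simp [hP, hQ])
    ((trank_sub_le P Q).trans (add_le_add hrP hrQ))
  calc |tinner (P - AtA A P) Q|
      = |tinner (P + Q - AtA A (P + Q)) (P + Q) - tinner (P - Q - AtA A (P - Q)) (P - Q)| / 4 := by
        rw [← tinner_sub_AtA_polarization, abs_mul]
        norm_num
    _ ≤ (δ * frobNorm (P + Q) ^ 2 + δ * frobNorm (P - Q) ^ 2) / 4 := by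
        gcongr
        exact (abs_sub _ _).trans (add_le_add hadd hsub)
    _ = δ / 2 * (frobNorm P ^ 2 + frobNorm Q ^ 2) := by
        rw [← mul_add, frobNorm_add_sq_add_frobNorm_sub_sq]
        ring

end RIP

theorem statement18_general {n k m r r' : ℕ} (A : Fin m → Tensor n n k)
    (δ : ℝ) (hRIP : RIP A (r + r') δ) :
    ∀ Z Y : Tensor n n k, ttr Z = Z → ttr Y = Y → trank Z ≤ r → trank Y ≤ r' →
      |tinner (Z - AtA A Z) Y| ≤ δ * frobNorm Z * frobNorm Y := by
  intro Z Y hZ hY hrZ hrY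
  rcases eq_or_ne Z 0 with rfl | hZ0
  · simp [tinner, AtA, frobNorm]
  rcases eq_or_ne Y 0 with rfl | hY0
  · simp [tinner, frobNorm]
  have hbound := hRIP.abs_tinner_sub_AtA_le (P := frobNorm Y • Z) (Q := frobNorm Z • Y)
    (by simp [hZ]) (by simp [hY]) ((trank_smul_le _ _).trans hrZ) ((trank_smul_le _ _).trans hrY)
  rw [AtA_smul, ← smul_sub, tinner_smul_left, tinner_smul_right, abs_mul, abs_mul,
    abs_of_nonneg (frobNorm_nonneg Y), abs_of_nonneg (frobNorm_nonneg Z), frobNorm_smul_sq,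
    frobNorm_smul_sq] at hbound
  refine le_of_mul_le_mul_left ?_ (mul_pos (frobNorm_pos hY0) (frobNorm_pos hZ0))
  calc frobNorm Y * frobNorm Z * |tinner (Z - AtA A Z) Y|
      = frobNorm Y * (frobNorm Z * |tinner (Z - AtA A Z) Y|) := by ring
    _ ≤ _ := hbound
    _ = frobNorm Y * frobNorm Z * (δ * frobNorm Z * frobNorm Y) := by ring

/-- If `𝒜` satisfies RIP(r+r′, δ) with `0 < δ < 1`, then for all
tubal-symmetric `Z, Y` with tubal ranks `≤ r` and `≤ r′`,
`|⟨(ℐ − 𝒜*𝒜)(Z), Y⟩| ≤ δ·‖Z‖_F·‖Y‖_F`. -/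
theorem statement18 {n k m r r' : ℕ} (A : Fin m → Tensor n n k)
    (hAsym : ∀ i, ttr (A i) = A i) (δ : ℝ) (hδ0 : 0 < δ) (hδ1 : δ < 1)
    (hRIP : RIP A (r + r') δ) :
    ∀ Z Y : Tensor n n k, ttr Z = Z → ttr Y = Y → trank Z ≤ r → trank Y ≤ r' →
      |tinner (Z - AtA A Z) Y| ≤ δ * frobNorm Z * frobNorm Y :=
  statement18_general A δ hRIP

end Tubal
end
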